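/- Let V, Y, Z, X, U be finitely supported random variables with U → V → X → (Y,Z) a Markov chain, and suppose the channel is less capable in the sense that I(X̃; Z) ≤ I(X̃; Y) for every input distribution X̃ fed into the channel p_{YZ|X}. Then I(V; Y | U) − I(V; Z | U) ≤ I(X; Y | U) − I(X; Z | U). -/

import Mathlib

/-!
Post-processing the output of `W` by `Prod.fst` or `Prod.snd` gives channels `K_Y, K_Z` from `X`.
Given `U`, `V` the output `O ∈ {Y, Z}` depends on `X` only, so the chain rule gives
`H(V,O,U) = H(U,V) + ∑ p(u,v) H(K_O ∘ p(·|v))` and `H(X,O,U) = H(U,X) + ∑ p(u,x) H(K_O(x))`.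
Hence `H(X,O,U) - H(V,O,U) = H(U,X) - H(U,V) - ∑ p(u,v) I_O(p(·|v))`, where `I_O(q)` is the mutual
information between the input and the output of `K_O` at input law `q`. After cancellation the claim
reads `∑ p(u,v) I_Z(p(·|v)) ≤ ∑ p(u,v) I_Y(p(·|v))`, which is the less capable property applied to
each conditional input law `p(·|v)`.
-/

open scoped Classical

/-- Shannon entropy (base 2) of the pushforward of a finitely supported
distribution `p` on `Ω` under a map `f : Ω → β`. -/
noncomputable def entP {Ω β : Type*} [Fintype Ω] [Fintype β] [DecidableEq β]
    (p : Ω → ℝ) (f : Ω → β) : ℝ :=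
  - ∑ b, (∑ ω, if f ω = b then p ω else 0) *
      Real.logb 2 (∑ ω, if f ω = b then p ω else 0)

open Finset Real

noncomputable def entropy {α : Type*} [Fintype α] (a : α → ℝ) : ℝ :=
  - ∑ i, a i * logb 2 (a i)

def pushforward {Ω β : Type*} [Fintype Ω] [DecidableEq β] (p : Ω → ℝ) (f : Ω → β) (b : β) :
    ℝ :=
  ∑ ω, if f ω = b then p ω else 0

section Entropy

variable {Ω α β γ : Type*} [Fintype Ω] [Fintype α] [Fintype β] [Fintype γ]

theorem entP_eq_entropy_pushforward [DecidableEq β] (p : Ω → ℝ) (f : Ω → β) :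
    entP p f = entropy (pushforward p f) := rfl

theorem sum_pushforward [DecidableEq β] (p : Ω → ℝ) (f : Ω → β) :
    ∑ b, pushforward p f b = ∑ ω, p ω := by
  simp only [pushforward]
  rw [Finset.sum_comm]
  simp

theorem entropy_comp_equiv (e : β ≃ α) (a : α → ℝ) : entropy (a ∘ e) = entropy a := by
  simp only [entropy, Function.comp_apply]
  rw [e.sum_comp (fun i => a i * logb 2 (a i))]

theorem sum_mul_mul_logb_mul {c : ℝ} (k : β → ℝ) (hk : c ≠ 0 → ∑ b, k b = 1) :
    ∑ b, c * k b * logb 2 (c * k b) = c * logb 2 c + c * ∑ b, k b * logb 2 (k b) := by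
  rcases eq_or_ne c 0 with rfl | hc
  · simp
  have hterm : ∀ b,
      c * k b * logb 2 (c * k b) = c * logb 2 c * k b + c * (k b * logb 2 (k b)) := by
    intro b
    rcases eq_or_ne (k b) 0 with hkb | hkb
    · simp [hkb]
    · rw [logb, log_mul hc hkb, logb, logb]
      ring
  simp only [hterm, sum_add_distrib, ← mul_sum, hk hc, mul_one]

theorem entropy_mul_kernel (a : α → ℝ) (k : α → β → ℝ) (hk : ∀ i, a i ≠ 0 → ∑ b, k i b = 1) :
    entropy (fun q : α × β => a q.1 * k q.1 q.2) = entropy a + ∑ i, a i * entropy (k i) := by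
  simp only [entropy, Fintype.sum_prod_type, fun i => sum_mul_mul_logb_mul (k i) (hk i),
    sum_add_distrib, mul_neg, sum_neg_distrib]
  ring

theorem entP_eq_of_pushforward_eq [DecidableEq β] (p : Ω → ℝ) (f : Ω → β) (e : α × γ ≃ β)
    (a : α → ℝ) (k : α → γ → ℝ) (hk : ∀ i, a i ≠ 0 → ∑ c, k i c = 1)
    (h : ∀ i c, pushforward p f (e (i, c)) = a i * k i c) :
    entP p f = entropy a + ∑ i, a i * entropy (k i) := by
  rw [entP_eq_entropy_pushforward, ← entropy_comp_equiv e, ← entropy_mul_kernel a k hk]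
  congr 1
  funext q
  exact h q.1 q.2

end Entropy

section Channel

variable {X S O : Type*} [Fintype X] [Fintype S] [Fintype O]

noncomputable def channelOutput (q : X → ℝ) (K : X → O → ℝ) (o : O) : ℝ :=
  ∑ x, q x * K x o

/-- `I(X;O)` for the input law `q` fed through the channel `K`. -/
noncomputable def channelInfo (q : X → ℝ) (K : X → O → ℝ) : ℝ :=
  entropy (channelOutput q K) - ∑ x, q x * entropy (K x)

theorem sum_channelOutput {q : X → ℝ} {K : X → O → ℝ} (hq : ∑ x, q x = 1)
    (hK : ∀ x, ∑ o, K x o = 1) : ∑ o, channelOutput q K o = 1 := by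
  simp only [channelOutput]
  rw [Finset.sum_comm]
  simp [← mul_sum, hK, hq]

variable [DecidableEq O]

def postcompose (W : X → S → ℝ) (g : S → O) (x : X) : O → ℝ :=
  pushforward (W x) g

omit [Fintype X] in
theorem sum_postcompose (W : X → S → ℝ) (g : S → O) (x : X) :
    ∑ o, postcompose W g x o = ∑ s, W x s :=
  sum_pushforward (W x) g

variable (q : X → ℝ) {W : X → S → ℝ} (hW : ∀ x, ∑ s, W x s = 1) (g : S → O)
include hW

theorem entP_input [DecidableEq X] :
    entP (fun ω : X × S => q ω.1 * W ω.1 ω.2) (fun ω => ω.1) = entropy q := by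
  rw [entP_eq_entropy_pushforward]
  congr 1
  funext x
  simp [pushforward, Fintype.sum_prod_type, ← mul_sum, hW]

theorem entP_input_output [DecidableEq X] :
    entP (fun ω : X × S => q ω.1 * W ω.1 ω.2) (fun ω => (ω.1, g ω.2))
      = entropy q + ∑ x, q x * entropy (postcompose W g x) := by
  refine entP_eq_of_pushforward_eq _ _ (Equiv.refl _) _ _
    (fun x _ => (sum_postcompose W g x).trans (hW x)) fun x o => ?_
  simp [pushforward, postcompose, Fintype.sum_prod_type, mul_sum, ite_and]

omit hW in
theorem entP_output :
    entP (fun ω : X × S => q ω.1 * W ω.1 ω.2) (fun ω => g ω.2)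
      = entropy (channelOutput q (postcompose W g)) := by
  rw [entP_eq_entropy_pushforward]
  congr 1
  funext o
  simp [pushforward, postcompose, channelOutput, Fintype.sum_prod_type, mul_sum]

theorem channelInfo_postcompose [DecidableEq X] :
    channelInfo q (postcompose W g)
      = entP (fun ω : X × S => q ω.1 * W ω.1 ω.2) (fun ω => ω.1)
        + entP (fun ω : X × S => q ω.1 * W ω.1 ω.2) (fun ω => g ω.2)
        - entP (fun ω : X × S => q ω.1 * W ω.1 ω.2) (fun ω => (ω.1, g ω.2)) := by
  rw [entP_input q hW, entP_output, entP_input_output q hW, channelInfo]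
  ring

end Channel

section MarkovChain

variable {U V X S O : Type*} [Fintype U] [Fintype V] [Fintype X] [Fintype S] [Fintype O]
  [DecidableEq O] {r : U × V → ℝ} {pX : V → X → ℝ} {W : X → S → ℝ} {p : U × V × X × S → ℝ}
  (hp : ∀ ω, p ω = r (ω.1, ω.2.1) * pX ω.2.1 ω.2.2.1 * W ω.2.2.1 ω.2.2.2)
  (hW : ∀ x, ∑ s, W x s = 1) (g : S → O)
include hp hW

theorem entP_markov_mid_output [DecidableEq U] [DecidableEq V] (hpX : ∀ v, ∑ x, pX v x = 1) :
    entP p (fun ω => (ω.2.1, g ω.2.2.2, ω.1))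
      = entropy r + ∑ uv, r uv * entropy (channelOutput (pX uv.2) (postcompose W g)) := by
  let e : (U × V) × O ≃ V × O × U :=
    ⟨fun q => (q.1.2, q.2, q.1.1), fun b => ((b.2.2, b.1), b.2.1), fun _ => rfl, fun _ => rfl⟩
  refine entP_eq_of_pushforward_eq _ _ e _ _
    (fun uv _ => sum_channelOutput (hpX uv.2) fun x => (sum_postcompose W g x).trans (hW x))
    fun uv o => ?_
  -- with the sum over `U` innermost, `simp` can collapse the constraint on the `U`-coordinate
  rw [pushforward, Fintype.sum_prod_type_right]
  simp [e, pushforward, postcompose, channelOutput, Fintype.sum_prod_type, hp, mul_sum, ite_and,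
    sum_ite_irrel, mul_assoc]

theorem entP_markov_input_output [DecidableEq U] [DecidableEq X] :
    entP p (fun ω => (ω.2.2.1, g ω.2.2.2, ω.1))
      = entropy (fun ux : U × X => ∑ v, r (ux.1, v) * pX v ux.2)
        + ∑ ux : U × X, (∑ v, r (ux.1, v) * pX v ux.2) * entropy (postcompose W g ux.2) := by
  let e : (U × X) × O ≃ X × O × U :=
    ⟨fun q => (q.1.2, q.2, q.1.1), fun b => ((b.2.2, b.1), b.2.1), fun _ => rfl, fun _ => rfl⟩
  refine entP_eq_of_pushforward_eq _ _ e _ _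
    (fun ux _ => (sum_postcompose W g ux.2).trans (hW ux.2)) fun ux o => ?_
  rw [pushforward, Fintype.sum_prod_type_right]
  simp [e, pushforward, postcompose, Fintype.sum_prod_type, hp, ite_and, sum_ite_irrel,
    sum_mul_sum, mul_ite]

omit hp hW in
theorem sum_mixture_mul (c : X → ℝ) :
    ∑ ux : U × X, (∑ v, r (ux.1, v) * pX v ux.2) * c ux.2
      = ∑ uv : U × V, r uv * ∑ x, pX uv.2 x * c x := by
  simp only [Fintype.sum_prod_type, sum_mul, mul_sum]
  refine sum_congr rfl fun u _ => ?_
  rw [Finset.sum_comm]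
  exact sum_congr rfl fun v _ => sum_congr rfl fun x _ => by ring

theorem entP_markov_input_sub_mid_add_channelInfo (hpX : ∀ v, ∑ x, pX v x = 1) :
    entP p (fun ω => (ω.2.2.1, g ω.2.2.2, ω.1)) - entP p (fun ω => (ω.2.1, g ω.2.2.2, ω.1))
      + ∑ uv, r uv * channelInfo (pX uv.2) (postcompose W g)
      = entropy (fun ux : U × X => ∑ v, r (ux.1, v) * pX v ux.2) - entropy r := by
  rw [entP_markov_input_output hp hW, entP_markov_mid_output hp hW g hpX,
    sum_mixture_mul fun x => entropy (postcompose W g x)]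
  simp only [channelInfo, mul_sub, sum_sub_distrib]
  ring

end MarkovChain

theorem less_capable_conditional_general {U V X Y Z : Type*}
    [Fintype U] [Fintype V] [Fintype X] [Fintype Y] [Fintype Z]
    (pU : U → ℝ) (hpU : ∀ u, 0 ≤ pU u)
    (pV : U → V → ℝ) (hpV : ∀ u v, 0 ≤ pV u v)
    (pX : V → X → ℝ) (hpX : ∀ v x, 0 ≤ pX v x) (hpXs : ∀ v, ∑ x, pX v x = 1)
    (W : X → Y → Z → ℝ)
    (hWs : ∀ x, ∑ y, ∑ z, W x y z = 1)
    (p : U × V × X × Y × Z → ℝ)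
    (hp : ∀ ω, p ω = pU ω.1 * pV ω.1 ω.2.1 * pX ω.2.1 ω.2.2.1 *
        W ω.2.2.1 ω.2.2.2.1 ω.2.2.2.2)
    -- the channel `W` is less capable: for every input distribution `q` on `X`,
    -- `I(X;Z) ≤ I(X;Y)` for the joint law `q(x) W(y,z|x)`
    (hlc : ∀ q : X → ℝ, (∀ x, 0 ≤ q x) → (∑ x, q x = 1) →
      entP (fun ω : X × Y × Z => q ω.1 * W ω.1 ω.2.1 ω.2.2) (fun ω => ω.1)
        + entP (fun ω : X × Y × Z => q ω.1 * W ω.1 ω.2.1 ω.2.2) (fun ω => ω.2.2)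
        - entP (fun ω : X × Y × Z => q ω.1 * W ω.1 ω.2.1 ω.2.2)
            (fun ω => (ω.1, ω.2.2))
      ≤ entP (fun ω : X × Y × Z => q ω.1 * W ω.1 ω.2.1 ω.2.2) (fun ω => ω.1)
        + entP (fun ω : X × Y × Z => q ω.1 * W ω.1 ω.2.1 ω.2.2) (fun ω => ω.2.1)
        - entP (fun ω : X × Y × Z => q ω.1 * W ω.1 ω.2.1 ω.2.2)
            (fun ω => (ω.1, ω.2.1))) :
    -- I(V;Y|U) − I(V;Z|U) ≤ I(X;Y|U) − I(X;Z|U)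
    (entP p (fun ω => (ω.2.1, ω.1)) + entP p (fun ω => (ω.2.2.2.1, ω.1))
        - entP p (fun ω => (ω.2.1, ω.2.2.2.1, ω.1)) - entP p (fun ω => ω.1))
      - (entP p (fun ω => (ω.2.1, ω.1)) + entP p (fun ω => (ω.2.2.2.2, ω.1))
        - entP p (fun ω => (ω.2.1, ω.2.2.2.2, ω.1)) - entP p (fun ω => ω.1))
    ≤ (entP p (fun ω => (ω.2.2.1, ω.1)) + entP p (fun ω => (ω.2.2.2.1, ω.1))
        - entP p (fun ω => (ω.2.2.1, ω.2.2.2.1, ω.1)) - entP p (fun ω => ω.1))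
      - (entP p (fun ω => (ω.2.2.1, ω.1)) + entP p (fun ω => (ω.2.2.2.2, ω.1))
        - entP p (fun ω => (ω.2.2.1, ω.2.2.2.2, ω.1)) - entP p (fun ω => ω.1)) := by
  let W' : X → Y × Z → ℝ := fun x s => W x s.1 s.2
  let r : U × V → ℝ := fun uv => pU uv.1 * pV uv.1 uv.2
  have hW' : ∀ x, ∑ s, W' x s = 1 := fun x => (Fintype.sum_prod_type _).trans (hWs x)
  have hY := entP_markov_input_sub_mid_add_channelInfo (r := r) hp hW' Prod.fst hpXs
  have hZ := entP_markov_input_sub_mid_add_channelInfo (r := r) hp hW' Prod.snd hpXs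
  have hinfo : ∑ uv, r uv * channelInfo (pX uv.2) (postcompose W' Prod.snd)
      ≤ ∑ uv, r uv * channelInfo (pX uv.2) (postcompose W' Prod.fst) := by
    refine sum_le_sum fun uv _ => mul_le_mul_of_nonneg_left ?_ (mul_nonneg (hpU _) (hpV _ _))
    rw [channelInfo_postcompose _ hW', channelInfo_postcompose _ hW']
    exact hlc (pX uv.2) (hpX uv.2) (hpXs uv.2)
  linarith

/-- for a Markov chain `U → V → X → (Y,Z)` with `(Y,Z)` generated
from `X` through a less capable channel `W` (i.e. `I(X̃;Z) ≤ I(X̃;Y)` for every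
input distribution `X̃`), one has
`I(V;Y|U) − I(V;Z|U) ≤ I(X;Y|U) − I(X;Z|U)`, where
`I(A;B|U) = H(A,U) + H(B,U) − H(A,B,U) − H(U)`. -/
theorem less_capable_conditional {U V X Y Z : Type*}
    [Fintype U] [Fintype V] [Fintype X] [Fintype Y] [Fintype Z]
    (pU : U → ℝ) (hpU : ∀ u, 0 ≤ pU u) (hpUs : ∑ u, pU u = 1)
    (pV : U → V → ℝ) (hpV : ∀ u v, 0 ≤ pV u v) (hpVs : ∀ u, ∑ v, pV u v = 1)
    (pX : V → X → ℝ) (hpX : ∀ v x, 0 ≤ pX v x) (hpXs : ∀ v, ∑ x, pX v x = 1)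
    (W : X → Y → Z → ℝ) (hW : ∀ x y z, 0 ≤ W x y z)
    (hWs : ∀ x, ∑ y, ∑ z, W x y z = 1)
    (p : U × V × X × Y × Z → ℝ)
    (hp : ∀ ω, p ω = pU ω.1 * pV ω.1 ω.2.1 * pX ω.2.1 ω.2.2.1 *
        W ω.2.2.1 ω.2.2.2.1 ω.2.2.2.2)
    -- the channel `W` is less capable: for every input distribution `q` on `X`,
    -- `I(X;Z) ≤ I(X;Y)` for the joint law `q(x) W(y,z|x)`
    (hlc : ∀ q : X → ℝ, (∀ x, 0 ≤ q x) → (∑ x, q x = 1) →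
      entP (fun ω : X × Y × Z => q ω.1 * W ω.1 ω.2.1 ω.2.2) (fun ω => ω.1)
        + entP (fun ω : X × Y × Z => q ω.1 * W ω.1 ω.2.1 ω.2.2) (fun ω => ω.2.2)
        - entP (fun ω : X × Y × Z => q ω.1 * W ω.1 ω.2.1 ω.2.2)
            (fun ω => (ω.1, ω.2.2))
      ≤ entP (fun ω : X × Y × Z => q ω.1 * W ω.1 ω.2.1 ω.2.2) (fun ω => ω.1)
        + entP (fun ω : X × Y × Z => q ω.1 * W ω.1 ω.2.1 ω.2.2) (fun ω => ω.2.1)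
        - entP (fun ω : X × Y × Z => q ω.1 * W ω.1 ω.2.1 ω.2.2)
            (fun ω => (ω.1, ω.2.1))) :
    -- I(V;Y|U) − I(V;Z|U) ≤ I(X;Y|U) − I(X;Z|U)
    (entP p (fun ω => (ω.2.1, ω.1)) + entP p (fun ω => (ω.2.2.2.1, ω.1))
        - entP p (fun ω => (ω.2.1, ω.2.2.2.1, ω.1)) - entP p (fun ω => ω.1))
      - (entP p (fun ω => (ω.2.1, ω.1)) + entP p (fun ω => (ω.2.2.2.2, ω.1))
        - entP p (fun ω => (ω.2.1, ω.2.2.2.2, ω.1)) - entP p (fun ω => ω.1))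
    ≤ (entP p (fun ω => (ω.2.2.1, ω.1)) + entP p (fun ω => (ω.2.2.2.1, ω.1))
        - entP p (fun ω => (ω.2.2.1, ω.2.2.2.1, ω.1)) - entP p (fun ω => ω.1))
      - (entP p (fun ω => (ω.2.2.1, ω.1)) + entP p (fun ω => (ω.2.2.2.2, ω.1))
        - entP p (fun ω => (ω.2.2.1, ω.2.2.2.2, ω.1)) - entP p (fun ω => ω.1)) :=
  less_capable_conditional_general pU hpU pV hpV pX hpX hpXs W hWs p hp hlc
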